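/- arXiv:1805.03041 — 2 statements merged into one kernel-verified Lean document; each statement's English description precedes it below -/
import Mathlib

section
/- Let p : (E,κ) → (B,λ) be a (κ,λ)-continuous surjection between digital images with the unique path lifting property. If b, b' ∈ B are λ-adjacent, then for every e ∈ p⁻¹(b) there is a unique element e' ∈ p⁻¹(b') such that e is κ-adjacent to e'. (Proposition 3.4(v)) -/
open Set

/-- 2-adjacency on `ℤ` (the `l₁`-adjacency on `ℤ`): `x` and `y` are distinct with `|x - y| = 1`. -/
def adj2 (x y : ℤ) : Prop := |x - y| = 1

/-- 8-adjacency on `ℤ²` (the `l₂`-adjacency on `ℤ²`). -/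
def adj8 (p q : ℤ × ℤ) : Prop := p ≠ q ∧ |p.1 - q.1| ≤ 1 ∧ |p.2 - q.2| ≤ 1

/-- 26-adjacency on `ℤ³` (the `l₃`-adjacency on `ℤ³`). -/
def adj26 (p q : ℤ × ℤ × ℤ) : Prop :=
  p ≠ q ∧ |p.1 - q.1| ≤ 1 ∧ |p.2.1 - q.2.1| ≤ 1 ∧ |p.2.2 - q.2.2| ≤ 1

/-- An adjacency relation (as any `l_u`-adjacency is) is symmetric and irreflexive. -/
def IsAdjacency {A : Type*} (κ : A → A → Prop) : Prop := Symmetric κ ∧ Irreflexive κ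

/-- `f` is `(κ,λ)`-continuous on `X`: κ-adjacent points are mapped to equal or λ-adjacent
points. -/
def DigContOn {A B : Type*} (f : A → B) (X : Set A)
    (κ : A → A → Prop) (lam : B → B → Prop) : Prop :=
  ∀ x₀ ∈ X, ∀ x₁ ∈ X, κ x₀ x₁ → f x₀ = f x₁ ∨ lam (f x₀) (f x₁)

/-- `f : [0,m]_ℤ → X` is a digital `κ`-path of length `m` in `X`,
i.e. a `(2,κ)`-continuous map on `[0,m]_ℤ` with values in `X`. -/
def IsDigPath {A : Type*} (X : Set A) (κ : A → A → Prop) (m : ℕ) (f : ℤ → A) : Prop :=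
  (∀ i ∈ Icc (0 : ℤ) (m : ℤ), f i ∈ X) ∧
  ∀ i ∈ Icc (0 : ℤ) (m : ℤ), ∀ j ∈ Icc (0 : ℤ) (m : ℤ),
    adj2 i j → f i = f j ∨ κ (f i) (f j)

/-- There is a digital `κ`-path of length `m` in `X` from `x` to `y`. -/
def ReachIn {A : Type*} (X : Set A) (κ : A → A → Prop) (x y : A) (m : ℕ) : Prop :=
  ∃ f : ℤ → A, IsDigPath X κ m f ∧ f 0 = x ∧ f (m : ℤ) = y

/-- `X` is `κ`-connected: every two of its points are joined by a `κ`-path in `X`. -/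
def DigConnected {A : Type*} (X : Set A) (κ : A → A → Prop) : Prop :=
  ∀ x ∈ X, ∀ y ∈ X, ∃ m : ℕ, ReachIn X κ x y m

/-- The `κ`-neighborhood `N_κ(e₀, ε)` of `e₀` in `X` with radius `ε`:
points of `X` whose shortest `κ`-path distance from `e₀` is at most `ε`, together with `e₀`. -/
def Nbhd {A : Type*} (X : Set A) (κ : A → A → Prop) (e₀ : A) (ε : ℕ) : Set A :=
  {e ∈ X | ∃ m : ℕ, m ≤ ε ∧ ReachIn X κ e₀ e m} ∪ {e₀}

/-- The restriction of `f` to `X` is a `(κ,λ)`-isomorphism onto `Y`: a `(κ,λ)`-continuous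
bijection of `X` onto `Y` whose inverse is `(λ,κ)`-continuous. -/
def IsDigIsoOn {A B : Type*} (f : A → B) (X : Set A) (Y : Set B)
    (κ : A → A → Prop) (lam : B → B → Prop) : Prop :=
  MapsTo f X Y ∧ InjOn f X ∧ SurjOn f X Y ∧ DigContOn f X κ lam ∧
  ∀ x₀ ∈ X, ∀ x₁ ∈ X, lam (f x₀) (f x₁) → x₀ = x₁ ∨ κ x₀ x₁

/-- `p` is a radius-`n` digital `(κ,λ)`-covering map of `E` onto `Bs`
(`n = 1` gives the usual digital `(κ,λ)`-covering map): a `(κ,λ)`-continuous surjection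
such that for each `b ∈ Bs` there is a set `F` of points of the fiber over `b` whose radius-`n`
neighborhoods are pairwise disjoint, partition `p⁻¹(N_λ(b,n))`, and are each mapped
isomorphically onto `N_λ(b,n)` by `p`. -/
def IsRadiusCovering {A B : Type*} (p : A → B) (E : Set A) (Bs : Set B)
    (κ : A → A → Prop) (lam : B → B → Prop) (n : ℕ) : Prop :=
  MapsTo p E Bs ∧ SurjOn p E Bs ∧ DigContOn p E κ lam ∧
  ∀ b ∈ Bs, ∃ F : Set A, F ⊆ {e ∈ E | p e = b} ∧
    (E ∩ p ⁻¹' (Nbhd Bs lam b n) = ⋃ e ∈ F, Nbhd E κ e n) ∧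
    F.Pairwise (fun e e' => Disjoint (Nbhd E κ e n) (Nbhd E κ e' n)) ∧
    ∀ e ∈ F, IsDigIsoOn p (Nbhd E κ e n) (Nbhd Bs lam b n) κ lam

/-- `p` is a radius-`n` local `(κ,λ)`-isomorphism (`n = 1` gives the usual local
`(κ,λ)`-isomorphism): for every `e ∈ E` the restriction of `p` to `N_κ(e,n)` is a
`(κ,λ)`-isomorphism onto `N_λ(p e, n)`. -/
def IsLocalIso {A B : Type*} (p : A → B) (E : Set A) (Bs : Set B)
    (κ : A → A → Prop) (lam : B → B → Prop) (n : ℕ) : Prop :=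
  ∀ e ∈ E, IsDigIsoOn p (Nbhd E κ e n) (Nbhd Bs lam (p e) n) κ lam

/-- `p` has the digital path lifting property: every `λ`-path `a` in `Bs` and every point
`e ∈ E` of the fiber over `a 0` admit a lifting of `a` beginning at `e`. -/
def PathLiftingProp {A B : Type*} (p : A → B) (E : Set A) (Bs : Set B)
    (κ : A → A → Prop) (lam : B → B → Prop) : Prop :=
  ∀ (m : ℕ) (a : ℤ → B), IsDigPath Bs lam m a → ∀ e ∈ E, p e = a 0 →
    ∃ g : ℤ → A, IsDigPath E κ m g ∧ (∀ i ∈ Icc (0 : ℤ) (m : ℤ), p (g i) = a i) ∧ g 0 = e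

/-- `p` has the uniqueness of digital path lifts property: two `κ`-paths in `E` with the
same projection and the same starting point coincide (on their domain `[0,m]_ℤ`). -/
def UniqLiftsProp {A B : Type*} (p : A → B) (E : Set A) (κ : A → A → Prop) : Prop :=
  ∀ (m : ℕ) (a b : ℤ → A), IsDigPath E κ m a → IsDigPath E κ m b →
    (∀ i ∈ Icc (0 : ℤ) (m : ℤ), p (a i) = p (b i)) → a 0 = b 0 →
    EqOn a b (Icc (0 : ℤ) (m : ℤ))

/-- `p` has the unique path lifting property (u.p.l.): both the path lifting property and
the uniqueness of path lifts property. -/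
def UPL {A B : Type*} (p : A → B) (E : Set A) (Bs : Set B)
    (κ : A → A → Prop) (lam : B → B → Prop) : Prop :=
  PathLiftingProp p E Bs κ lam ∧ UniqLiftsProp p E κ

/-- `e` is a conciliator point for `p`: there are `e', e'' ∈ N_κ(e,1)` which are not
`κ`-adjacent but whose images are `λ`-adjacent. -/
def IsConciliator {A B : Type*} (p : A → B) (E : Set A)
    (κ : A → A → Prop) (lam : B → B → Prop) (e : A) : Prop :=
  ∃ e' ∈ Nbhd E κ e 1, ∃ e'' ∈ Nbhd E κ e 1, ¬ κ e' e'' ∧ lam (p e') (p e'')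

/-- `f : [0,m]_ℤ → X` is a simple `κ`-loop of length `m` in `X`: a closed `κ`-path such that
`f 0, …, f (m-1)` are pairwise distinct and `f i`, `f j` are `κ`-adjacent iff
`j = i ± 1 (mod m)`. -/
def IsSimpleLoop {A : Type*} (X : Set A) (κ : A → A → Prop) (m : ℕ) (f : ℤ → A) : Prop :=
  IsDigPath X κ m f ∧ f 0 = f (m : ℤ) ∧
  (∀ i ∈ Ico (0 : ℤ) (m : ℤ), ∀ j ∈ Ico (0 : ℤ) (m : ℤ), f i = f j → i = j) ∧
  ∀ i ∈ Ico (0 : ℤ) (m : ℤ), ∀ j ∈ Ico (0 : ℤ) (m : ℤ),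
    (κ (f i) (f j) ↔ (j % (m : ℤ) = (i + 1) % (m : ℤ) ∨ j % (m : ℤ) = (i - 1) % (m : ℤ)))

def edgePath {A : Type*} (x y : A) : ℤ → A := fun i => if i ≤ 0 then x else y

@[simp] theorem edgePath_zero {A : Type*} (x y : A) : edgePath x y 0 = x := rfl

@[simp] theorem edgePath_one {A : Type*} (x y : A) : edgePath x y 1 = y := rfl

theorem isDigPath_one_iff {A : Type*} {X : Set A} {κ : A → A → Prop} (hκ : Symmetric κ)
    {f : ℤ → A} : IsDigPath X κ 1 f ↔ f 0 ∈ X ∧ f 1 ∈ X ∧ (f 0 = f 1 ∨ κ (f 0) (f 1)) := by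
  have hIcc : Icc (0 : ℤ) ((1 : ℕ) : ℤ) = {0, 1} := by
    ext i
    simp only [Nat.cast_one, mem_Icc, mem_insert_iff, mem_singleton_iff]
    omega
  rw [IsDigPath, hIcc]
  simp only [mem_insert_iff, mem_singleton_iff, forall_eq_or_imp, forall_eq, adj2, sub_zero,
    abs_zero, zero_ne_one, true_or, implies_true, zero_sub, Int.reduceNeg, abs_neg, abs_one,
    forall_const, true_and, sub_self, and_true]
  rw [and_assoc]
  refine and_congr_right fun _ => and_congr_right fun _ => and_iff_left_of_imp ?_
  rintro (h | h)
  exacts [.inl h.symm, .inr (hκ h)]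

theorem isDigPath_edgePath {A : Type*} {X : Set A} {κ : A → A → Prop} (hκ : Symmetric κ)
    {x y : A} (hx : x ∈ X) (hy : y ∈ X) (hxy : κ x y) : IsDigPath X κ 1 (edgePath x y) :=
  (isDigPath_one_iff hκ).2 ⟨hx, hy, .inr hxy⟩

theorem PathLiftingProp.exists_adj_lift {A B : Type*} {p : A → B} {E : Set A} {Bs : Set B}
    {κ : A → A → Prop} {lam : B → B → Prop} (hlift : PathLiftingProp p E Bs κ lam)
    (hκ : Symmetric κ) (hlam : IsAdjacency lam) {b b' : B} (hb : b ∈ Bs) (hb' : b' ∈ Bs)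
    (hbb' : lam b b') {e : A} (he : e ∈ E) (hpe : p e = b) :
    ∃ e' ∈ E, p e' = b' ∧ κ e e' := by
  obtain ⟨g, hg, hpg, rfl⟩ := hlift 1 (edgePath b b') (isDigPath_edgePath hlam.1 hb hb' hbb')
    e he hpe
  obtain ⟨-, hg1, hstay | hadj⟩ := (isDigPath_one_iff hκ).1 hg
  · have hpg1 : p (g 1) = b' := hpg 1 (by simp)
    rw [← hstay, hpe] at hpg1
    exact absurd (hpg1 ▸ hbb') (hlam.2 b)
  · exact ⟨g 1, hg1, hpg 1 (by simp), hadj⟩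

theorem UniqLiftsProp.eq_of_adj {A B : Type*} {p : A → B} {E : Set A} {κ : A → A → Prop}
    (huniq : UniqLiftsProp p E κ) (hκ : Symmetric κ) {e e' e'' : A} (he : e ∈ E)
    (he' : e' ∈ E) (he'' : e'' ∈ E) (hee' : κ e e') (hee'' : κ e e'') (hp : p e' = p e'') :
    e' = e'' := by
  have hproj : ∀ i ∈ Icc (0 : ℤ) ((1 : ℕ) : ℤ), p (edgePath e e' i) = p (edgePath e e'' i) := by
    intro i _
    unfold edgePath
    split_ifs
    · rfl
    · exact hp
  exact huniq 1 _ _ (isDigPath_edgePath hκ he he' hee') (isDigPath_edgePath hκ he he'' hee'')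
    hproj rfl (show (1 : ℤ) ∈ Icc 0 ((1 : ℕ) : ℤ) by simp)

theorem prop_3_4_v_general {N M : ℕ} (E : Set (Fin N → ℤ)) (Bs : Set (Fin M → ℤ))
    (κ : (Fin N → ℤ) → (Fin N → ℤ) → Prop) (lam : (Fin M → ℤ) → (Fin M → ℤ) → Prop)
    (hκ : IsAdjacency κ) (hlam : IsAdjacency lam)
    (p : (Fin N → ℤ) → (Fin M → ℤ))
    (hupl : UPL p E Bs κ lam)
    (b b' : Fin M → ℤ) (hb : b ∈ Bs) (hb' : b' ∈ Bs) (hladj : lam b b') :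
    ∀ e ∈ E, p e = b → ∃! e' : Fin N → ℤ, e' ∈ E ∧ p e' = b' ∧ κ e e' := by
  intro e he hpe
  obtain ⟨e', he', hpe', hee'⟩ := hupl.1.exists_adj_lift hκ.1 hlam hb hb' hladj he hpe
  refine ⟨e', ⟨he', hpe', hee'⟩, ?_⟩
  rintro e'' ⟨he'', hpe'', hee''⟩
  exact hupl.2.eq_of_adj hκ.1 he he'' he' hee'' hee' (hpe''.trans hpe'.symm)

/-- Proposition 3.4(v): if `p` is a `(κ,λ)`-continuous surjection between digital images
with the unique path lifting property and `b`, `b'` are `λ`-adjacent, then for every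
`e ∈ p⁻¹(b)` there is a unique `e' ∈ p⁻¹(b')` with `e` `κ`-adjacent to `e'`. -/
theorem prop_3_4_v {N M : ℕ} (E : Set (Fin N → ℤ)) (Bs : Set (Fin M → ℤ))
    (κ : (Fin N → ℤ) → (Fin N → ℤ) → Prop) (lam : (Fin M → ℤ) → (Fin M → ℤ) → Prop)
    (hκ : IsAdjacency κ) (hlam : IsAdjacency lam)
    (p : (Fin N → ℤ) → (Fin M → ℤ))
    (hmaps : Set.MapsTo p E Bs) (hsurj : Set.SurjOn p E Bs)
    (hcont : DigContOn p E κ lam) (hupl : UPL p E Bs κ lam)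
    (b b' : Fin M → ℤ) (hb : b ∈ Bs) (hb' : b' ∈ Bs) (hladj : lam b b') :
    ∀ e ∈ E, p e = b → ∃! e' : Fin N → ℤ, e' ∈ E ∧ p e' = b' ∧ κ e e' :=
  prop_3_4_v_general E Bs κ lam hκ hlam p hupl b b' hb hb' hladj
end

section
/- Let p : (E,κ) → (B,λ) be a (κ,λ)-covering map, e ∈ E, e' ∈ N_κ(e,1) and e'' ∈ N_κ(e,2) with e' ≠ e''. Then p(e') ≠ p(e''). (Lemma 4.4) -/
open Set

section Paths

variable {A : Type*} {X : Set A} {κ : A → A → Prop} {f : ℤ → A} {x y : A} {m k : ℕ}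

lemma IsDigPath.mono (hf : IsDigPath X κ m f) (hk : k ≤ m) : IsDigPath X κ k f := by
  have hsub : Icc (0 : ℤ) k ⊆ Icc 0 m := Icc_subset_Icc_right (by exact_mod_cast hk)
  exact ⟨fun i hi => hf.1 i (hsub hi), fun i hi j hj => hf.2 i (hsub hi) j (hsub hj)⟩

lemma IsDigPath.shift (hf : IsDigPath X κ (m + k) f) : IsDigPath X κ k (fun i => f (i + m)) := by
  have hmem : ∀ i ∈ Icc (0 : ℤ) k, i + m ∈ Icc (0 : ℤ) ↑(m + k) := by
    intro i ⟨hi0, hik⟩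
    constructor <;> push_cast <;> omega
  refine ⟨fun i hi => hf.1 _ (hmem i hi), fun i hi j hj hij => hf.2 _ (hmem i hi) _ (hmem j hj) ?_⟩
  simpa only [adj2, add_sub_add_right_eq_sub] using hij

lemma ReachIn.right_mem (h : ReachIn X κ x y m) : y ∈ X := by
  obtain ⟨f, hf, -, rfl⟩ := h
  exact hf.1 m ⟨by positivity, le_rfl⟩

lemma ReachIn.exists_split (h : ReachIn X κ x y (m + k)) :
    ∃ z, ReachIn X κ x z m ∧ ReachIn X κ z y k := by
  obtain ⟨f, hf, hf0, hfmk⟩ := h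
  refine ⟨f m, ⟨f, hf.mono (Nat.le_add_right m k), hf0, rfl⟩,
    ⟨fun i => f (i + m), hf.shift, by simp, ?_⟩⟩
  simpa [add_comm] using hfmk

lemma ReachIn.eq_of_zero (h : ReachIn X κ x y 0) : x = y := by
  obtain ⟨f, -, rfl, rfl⟩ := h
  rfl

lemma ReachIn.eq_or_rel_of_one (h : ReachIn X κ x y 1) : x = y ∨ κ x y := by
  obtain ⟨f, hf, rfl, rfl⟩ := h
  exact hf.2 0 (by simp) 1 (by simp) (by simp [adj2])

lemma reachIn_one_of_rel (hsym : Symmetric κ) (hx : x ∈ X) (hy : y ∈ X) (hxy : κ x y) :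
    ReachIn X κ x y 1 := by
  refine ⟨fun i => if i ≤ 0 then x else y, ⟨?_, ?_⟩, by simp, by simp⟩
  · intro i _
    dsimp only
    split_ifs <;> assumption
  · intro i hi j hj hij
    simp only [Nat.cast_one, mem_Icc] at hi hj
    have hij' : (i = 0 ∧ j = 1) ∨ (i = 1 ∧ j = 0) := by
      rcases (abs_eq zero_le_one).mp hij with h | h <;> omega
    rcases hij' with ⟨rfl, rfl⟩ | ⟨rfl, rfl⟩
    · exact Or.inr (by simpa using hxy)
    · exact Or.inr (by simpa using hsym hxy)

end Paths

section Neighborhoods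

variable {A : Type*} {X : Set A} {κ : A → A → Prop} {x y : A} {m n : ℕ}

lemma mem_nbhd_self : x ∈ Nbhd X κ x n := Or.inr rfl

lemma nbhd_subset (hx : x ∈ X) : Nbhd X κ x n ⊆ X := by
  rintro y (⟨hy, -⟩ | rfl)
  exacts [hy, hx]

lemma mem_nbhd_of_reachIn (h : ReachIn X κ x y m) (hm : m ≤ n) : y ∈ Nbhd X κ x n :=
  Or.inl ⟨h.right_mem, m, hm, h⟩

lemma mem_nbhd_one_of_rel (hsym : Symmetric κ) (hx : x ∈ X) (hy : y ∈ X) (hxy : κ x y) :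
    y ∈ Nbhd X κ x 1 :=
  mem_nbhd_of_reachIn (reachIn_one_of_rel hsym hx hy hxy) le_rfl

lemma eq_or_rel_of_mem_nbhd_one (hy : y ∈ Nbhd X κ x 1) : x = y ∨ κ x y := by
  rcases hy with ⟨-, m, hm, h⟩ | rfl
  · interval_cases m
    exacts [Or.inl h.eq_of_zero, h.eq_or_rel_of_one]
  · exact Or.inl rfl

lemma exists_mem_nbhd_one_of_mem_nbhd_two (hy : y ∈ Nbhd X κ x 2) :
    ∃ z ∈ Nbhd X κ x 1, y ∈ Nbhd X κ z 1 := by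
  rcases hy with ⟨-, m, hm, h⟩ | rfl
  · obtain hm1 | rfl : m ≤ 1 ∨ m = 2 := by omega
    · exact ⟨x, mem_nbhd_self, mem_nbhd_of_reachIn h hm1⟩
    · obtain ⟨z, hxz, hzy⟩ := ReachIn.exists_split (m := 1) (k := 1) h
      exact ⟨z, mem_nbhd_of_reachIn hxz le_rfl, mem_nbhd_of_reachIn hzy le_rfl⟩
  · exact ⟨y, mem_nbhd_self, mem_nbhd_self⟩

end Neighborhoods

section LocalIso

variable {A B : Type*} {p : A → B} {E : Set A} {Bs : Set B}
  {κ : A → A → Prop} {lam : B → B → Prop} {x y a b : A} {n : ℕ}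

/-- The sheet of `p⁻¹(N_λ(p x, n))` containing `x` is the one centred at `x`, because `p` is
injective on that sheet and its centre lies over `p x`. -/
lemma IsRadiusCovering.isLocalIso (hcov : IsRadiusCovering p E Bs κ lam n) :
    IsLocalIso p E Bs κ lam n := by
  intro x hx
  obtain ⟨F, hF, hpart, -, hiso⟩ := hcov.2.2.2 (p x) (hcov.1 hx)
  have hx' : x ∈ ⋃ e ∈ F, Nbhd E κ e n := hpart ▸ ⟨hx, mem_nbhd_self⟩
  obtain ⟨g, hg, hxg⟩ := mem_iUnion₂.mp hx'
  have hgx : g = x := (hiso g hg).2.1 mem_nbhd_self hxg (hF hg).2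
  exact hgx ▸ hiso g hg

lemma IsLocalIso.eq_or_rel_apply (hp : IsLocalIso p E Bs κ lam 1) (hx : x ∈ E)
    (hy : y ∈ Nbhd E κ x 1) : p x = p y ∨ lam (p x) (p y) := by
  rcases eq_or_rel_of_mem_nbhd_one hy with rfl | hxy
  · exact Or.inl rfl
  · exact (hp x hx).2.2.2.1 x mem_nbhd_self y hy hxy

lemma IsLocalIso.mem_nbhd_one_of_eq_or_rel_apply (hp : IsLocalIso p E Bs κ lam 1)
    (hsym : Symmetric κ) (hx : x ∈ E) (ha : a ∈ Nbhd E κ x 1) (hb : b ∈ Nbhd E κ x 1)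
    (hab : p a = p b ∨ lam (p a) (p b)) : b ∈ Nbhd E κ a 1 := by
  have hrel : a = b ∨ κ a b := by
    rcases hab with hab | hab
    · exact Or.inl ((hp x hx).2.1 ha hb hab)
    · exact (hp x hx).2.2.2.2 a ha b hb hab
  rcases hrel with rfl | hrel
  · exact mem_nbhd_self
  · exact mem_nbhd_one_of_rel hsym (nbhd_subset hx ha) (nbhd_subset hx hb) hrel

/-- Write `y ∈ N(z, 1)` with `z ∈ N(x, 1)`. Since `p z` and `p y = p a` are equal or adjacent,
injectivity and the continuity of the inverse on `N(x, 1)` put `a` into `N(z, 1)` as well,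
and `p` is injective on `N(z, 1)`. -/
lemma IsLocalIso.apply_ne_of_mem_nbhd_one_of_mem_nbhd_two (hp : IsLocalIso p E Bs κ lam 1)
    (hsym : Symmetric κ) (hx : x ∈ E) (ha : a ∈ Nbhd E κ x 1) (hy : y ∈ Nbhd E κ x 2)
    (hay : a ≠ y) : p a ≠ p y := by
  intro hpay
  obtain ⟨z, hz, hyz⟩ := exists_mem_nbhd_one_of_mem_nbhd_two hy
  have hzE : z ∈ E := nbhd_subset hx hz
  have haz : a ∈ Nbhd E κ z 1 :=
    hp.mem_nbhd_one_of_eq_or_rel_apply hsym hx hz ha (hpay ▸ hp.eq_or_rel_apply hzE hyz)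
  exact hay ((hp z hzE).2.1 haz hyz hpay)

end LocalIso

theorem lem_4_4_general {N M : ℕ} (E : Set (Fin N → ℤ)) (Bs : Set (Fin M → ℤ))
    (κ : (Fin N → ℤ) → (Fin N → ℤ) → Prop) (lam : (Fin M → ℤ) → (Fin M → ℤ) → Prop)
    (hκ : IsAdjacency κ)
    (p : (Fin N → ℤ) → (Fin M → ℤ))
    (hcov : IsRadiusCovering p E Bs κ lam 1)
    (e e' e'' : Fin N → ℤ) (he : e ∈ E)
    (he' : e' ∈ Nbhd E κ e 1) (he'' : e'' ∈ Nbhd E κ e 2) (hne : e' ≠ e'') :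
    p e' ≠ p e'' :=
  hcov.isLocalIso.apply_ne_of_mem_nbhd_one_of_mem_nbhd_two hκ.1 he he' he'' hne

/-- Lemma 4.4: if `p` is a `(κ,λ)`-covering map, `e ∈ E`, `e' ∈ N_κ(e,1)`,
`e'' ∈ N_κ(e,2)` and `e' ≠ e''`, then `p e' ≠ p e''`. -/
theorem lem_4_4 {N M : ℕ} (E : Set (Fin N → ℤ)) (Bs : Set (Fin M → ℤ))
    (κ : (Fin N → ℤ) → (Fin N → ℤ) → Prop) (lam : (Fin M → ℤ) → (Fin M → ℤ) → Prop)
    (hκ : IsAdjacency κ) (hlam : IsAdjacency lam)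
    (p : (Fin N → ℤ) → (Fin M → ℤ))
    (hcov : IsRadiusCovering p E Bs κ lam 1)
    (e e' e'' : Fin N → ℤ) (he : e ∈ E)
    (he' : e' ∈ Nbhd E κ e 1) (he'' : e'' ∈ Nbhd E κ e 2) (hne : e' ≠ e'') :
    p e' ≠ p e'' :=
  lem_4_4_general E Bs κ lam hκ p hcov e e' e'' he he' he'' hne
end
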